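/- Let A be an invertible real n×n matrix and define γ(t) = A e^{−2t} + (1 − e^{−2t})·A(√(AᵀA))⁻¹ for t ≥ 0. Then γ(0) = A, γ(t) is invertible for all t ≥ 0, γ satisfies the differential equation γ′(t) = −2γ(t) + 2(γ(t)ᵀ)⁻¹·√(γ(t)ᵀγ(t)) for all t ≥ 0, and γ(t) converges as t → ∞ to the orthogonal matrix A(√(AᵀA))⁻¹. -/

import Mathlib

open Matrix Filter

attribute [local instance] Matrix.normedAddCommGroup Matrix.normedSpace

open scoped Classical in
/-- The unique positive semidefinite square root of a positive semidefinite real matrix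
(junk value `0` on matrices that are not positive semidefinite). -/
noncomputable def psdSqrt {n : ℕ} (X : Matrix (Fin n) (Fin n) ℝ) : Matrix (Fin n) (Fin n) ℝ :=
  if h : X.PosSemidef then
    (h.1.eigenvectorUnitary : Matrix (Fin n) (Fin n) ℝ) *
      diagonal (fun i => Real.sqrt (h.1.eigenvalues i)) *
      (star h.1.eigenvectorUnitary : Matrix (Fin n) (Fin n) ℝ)
  else 0

/-!
Write `A = Q S` with `S = √(AᵀA)` positive definite and `Q = A S⁻¹` orthogonal. Then
`γ(t) = Q M(t)` with `M(t) = e^{-2t} S + (1 - e^{-2t}) 1` positive definite, so `γᵀγ = M²`,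
`√(γᵀγ) = M` and `(γᵀ)⁻¹ √(γᵀγ) = Q M⁻¹ M = Q` along the whole curve. The flow equation thus
becomes the linear equation `γ' = -2γ + 2Q`, solved by exponential interpolation from `A` to `Q`.
-/

open scoped MatrixOrder

namespace Matrix

variable {n : ℕ}

lemma psdSqrt_eq_sqrt {X : Matrix (Fin n) (Fin n) ℝ} (hX : X.PosSemidef) :
    psdSqrt X = CFC.sqrt X := by
  rw [CFC.sqrt_eq_real_sqrt X hX.nonneg, cfcₙ_eq_cfc, hX.1.cfc_eq, IsHermitian.cfc,
    Unitary.conjStarAlgAut_apply, psdSqrt, dif_pos hX]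
  simp only [Function.comp_def, RCLike.ofReal_real_eq_id, id]

lemma psdSqrt_mul_self_of_posSemidef {X : Matrix (Fin n) (Fin n) ℝ} (hX : X.PosSemidef) :
    psdSqrt X * psdSqrt X = X := by
  rw [psdSqrt_eq_sqrt hX, CFC.sqrt_mul_sqrt_self X hX.nonneg]

lemma psdSqrt_mul_self {M : Matrix (Fin n) (Fin n) ℝ} (hM : M.PosSemidef) :
    psdSqrt (M * M) = M := by
  rw [psdSqrt_eq_sqrt (by simpa only [sq] using hM.pow 2), ← sq, CFC.sqrt_sq M hM.nonneg]

lemma PosDef.posDef_psdSqrt {X : Matrix (Fin n) (Fin n) ℝ} (hX : X.PosDef) :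
    (psdSqrt X).PosDef := by
  rw [psdSqrt_eq_sqrt hX.posSemidef, ← isStrictlyPositive_iff_posDef]
  exact IsStrictlyPositive.sqrt X hX.isStrictlyPositive

lemma posDef_transpose_mul_self {A : Matrix (Fin n) (Fin n) ℝ} (hA : IsUnit A.det) :
    (Aᵀ * A).PosDef := by
  have hAA : (Aᵀ * A).PosSemidef := by
    simpa only [conjTranspose_eq_transpose_of_trivial] using posSemidef_conjTranspose_mul_self A
  rw [hAA.posDef_iff_isUnit, isUnit_iff_isUnit_det, det_mul, det_transpose]
  exact hA.mul hA

noncomputable def polarFactor (A : Matrix (Fin n) (Fin n) ℝ) : Matrix (Fin n) (Fin n) ℝ :=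
  A * (psdSqrt (Aᵀ * A))⁻¹

section PolarFactor

variable {A : Matrix (Fin n) (Fin n) ℝ} (hA : IsUnit A.det)
include hA

lemma isUnit_det_psdSqrt_transpose_mul_self : IsUnit (psdSqrt (Aᵀ * A)).det :=
  (isUnit_iff_isUnit_det _).mp (posDef_transpose_mul_self hA).posDef_psdSqrt.isUnit

lemma polarFactor_mul_psdSqrt : polarFactor A * psdSqrt (Aᵀ * A) = A := by
  rw [polarFactor, mul_assoc, nonsing_inv_mul _ (isUnit_det_psdSqrt_transpose_mul_self hA),
    mul_one]

lemma transpose_polarFactor_mul_self : (polarFactor A)ᵀ * polarFactor A = 1 := by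
  have hS := (posDef_transpose_mul_self hA).posDef_psdSqrt
  have hSS := psdSqrt_mul_self_of_posSemidef (posDef_transpose_mul_self hA).posSemidef
  have hSdet := isUnit_det_psdSqrt_transpose_mul_self hA
  rw [polarFactor]
  generalize psdSqrt (Aᵀ * A) = S at hS hSS hSdet ⊢
  calc (A * S⁻¹)ᵀ * (A * S⁻¹) = S⁻¹ * (Aᵀ * A) * S⁻¹ := by
        rw [transpose_mul, transpose_nonsing_inv, show Sᵀ = S from hS.1]; simp only [mul_assoc]
    _ = (S⁻¹ * S) * (S * S⁻¹) := by rw [← hSS]; simp only [mul_assoc]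
    _ = 1 := by rw [nonsing_inv_mul _ hSdet, mul_nonsing_inv _ hSdet, mul_one]

end PolarFactor

section Orthogonal

variable {Q M : Matrix (Fin n) (Fin n) ℝ} (hQ : Qᵀ * Q = 1) (hM : M.PosDef)
include hQ hM

lemma isUnit_det_orthogonal_mul_posDef : IsUnit (Q * M).det := by
  rw [det_mul]
  exact (isUnit_det_of_left_inverse hQ).mul ((isUnit_iff_isUnit_det M).mp hM.isUnit)

lemma transpose_inv_mul_psdSqrt_orthogonal_mul_posDef :
    ((Q * M)ᵀ)⁻¹ * psdSqrt ((Q * M)ᵀ * (Q * M)) = Q := by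
  have hMT : Mᵀ = M := hM.1
  have hMM : (Q * M)ᵀ * (Q * M) = M * M := by
    rw [transpose_mul, hMT, mul_assoc, ← mul_assoc Qᵀ, hQ, one_mul]
  rw [hMM, psdSqrt_mul_self hM.posSemidef, transpose_mul, hMT, Matrix.mul_inv_rev, mul_assoc,
    nonsing_inv_mul _ ((isUnit_iff_isUnit_det M).mp hM.isUnit), mul_one, inv_eq_right_inv hQ]

end Orthogonal

lemma PosDef.smul_add_smul_one {S : Matrix (Fin n) (Fin n) ℝ} (hS : S.PosDef) {a b : ℝ}
    (ha : 0 < a) (hb : 0 ≤ b) : (a • S + b • 1).PosDef :=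
  (hS.smul ha).add_posSemidef (PosSemidef.one.smul hb)

end Matrix

section ExpInterpolation

variable {E : Type*} [NormedAddCommGroup E] [NormedSpace ℝ E] (a b : E)

lemma hasDerivAt_exp_interpolation (t : ℝ) :
    HasDerivAt (fun s : ℝ => Real.exp (-2 * s) • a + (1 - Real.exp (-2 * s)) • b)
      ((-2 : ℝ) • (Real.exp (-2 * t) • a + (1 - Real.exp (-2 * t)) • b) + (2 : ℝ) • b) t := by
  have hexp : HasDerivAt (fun s : ℝ => Real.exp (-2 * s)) (Real.exp (-2 * t) * -2) t := by
    simpa using ((hasDerivAt_id t).const_mul (-2 : ℝ)).exp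
  refine ((hexp.smul_const a).add
    (((hasDerivAt_const t (1 : ℝ)).sub hexp).smul_const b)).congr_deriv ?_
  module

lemma tendsto_exp_interpolation :
    Tendsto (fun s : ℝ => Real.exp (-2 * s) • a + (1 - Real.exp (-2 * s)) • b) atTop (nhds b) := by
  have hexp : Tendsto (fun s : ℝ => Real.exp (-2 * s)) atTop (nhds 0) :=
    Real.tendsto_exp_atBot.comp (tendsto_id.const_mul_atTop_of_neg (by norm_num))
  have h := (hexp.smul_const a).add ((tendsto_const_nhds.sub hexp (a := (1 : ℝ))).smul_const b)
  rwa [zero_smul, sub_zero, one_smul, zero_add] at h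

end ExpInterpolation

/-- Let A be an invertible real n×n matrix and
γ(t) = A e^{−2t} + (1 − e^{−2t})·A(√(AᵀA))⁻¹ for t ≥ 0.  Then γ(0) = A, γ(t) is invertible for
all t ≥ 0, γ satisfies γ′(t) = −2γ(t) + 2(γ(t)ᵀ)⁻¹·√(γ(t)ᵀγ(t)) for all t ≥ 0, and γ(t)
converges as t → ∞ to the orthogonal matrix A(√(AᵀA))⁻¹. -/
theorem gradient_flow_line_GL {n : ℕ} (A : Matrix (Fin n) (Fin n) ℝ) (hA : IsUnit A.det) :
    letI γ : ℝ → Matrix (Fin n) (Fin n) ℝ := fun t =>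
      Real.exp (-2 * t) • A + (1 - Real.exp (-2 * t)) • (A * (psdSqrt (Aᵀ * A))⁻¹)
    γ 0 = A ∧
    (∀ t : ℝ, 0 ≤ t → IsUnit (γ t).det) ∧
    (∀ t : ℝ, 0 ≤ t →
      HasDerivAt γ ((-2 : ℝ) • γ t + (2 : ℝ) • (((γ t)ᵀ)⁻¹ * psdSqrt ((γ t)ᵀ * γ t))) t) ∧
    (A * (psdSqrt (Aᵀ * A))⁻¹)ᵀ * (A * (psdSqrt (Aᵀ * A))⁻¹) = 1 ∧
    Tendsto γ atTop (nhds (A * (psdSqrt (Aᵀ * A))⁻¹)) := by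
  set Q := A * (psdSqrt (Aᵀ * A))⁻¹
  set γ : ℝ → Matrix (Fin n) (Fin n) ℝ := fun t =>
    Real.exp (-2 * t) • A + (1 - Real.exp (-2 * t)) • Q
  set S := psdSqrt (Aᵀ * A)
  have hQ : Qᵀ * Q = 1 := transpose_polarFactor_mul_self hA
  have hQS : Q * S = A := polarFactor_mul_psdSqrt hA
  have hγ : ∀ t, γ t = Q * (Real.exp (-2 * t) • S + (1 - Real.exp (-2 * t)) • 1) := fun t => by
    rw [mul_add, mul_smul_comm, mul_smul_comm, hQS, mul_one]
  have hM : ∀ t, 0 ≤ t → (Real.exp (-2 * t) • S + (1 - Real.exp (-2 * t)) • 1).PosDef :=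
    fun t ht => (posDef_transpose_mul_self hA).posDef_psdSqrt.smul_add_smul_one (Real.exp_pos _)
      (by simp only [sub_nonneg, Real.exp_le_one_iff]; linarith)
  refine ⟨by simp [γ], fun t ht => ?_, fun t ht => ?_, hQ, tendsto_exp_interpolation A Q⟩
  · rw [hγ]
    exact isUnit_det_orthogonal_mul_posDef hQ (hM t ht)
  · rw [hγ t, transpose_inv_mul_psdSqrt_orthogonal_mul_posDef hQ (hM t ht), ← hγ t]
    exact hasDerivAt_exp_interpolation A Q t
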